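/- arXiv:1805.02217 — 4 statements merged into one kernel-verified Lean document; each statement's English description precedes it below -/
import Mathlib

section
/- Let ℱ be a down-closed family of subsets of a finite set F, 𝒫 a sub-partition of F, and val : F → ℕ a function constant on each part of 𝒫 and zero outside ⋃𝒫. If every T ∈ ℱ with |T ∩ A| ≤ 1 for all A ∈ 𝒫 satisfies val(T) ≤ m − 1, then every S ∈ ℱ satisfies Σ_{A ∈ 𝒫 : S ∩ A ≠ ∅} n_A ≤ m − 1, where n_A is the common value of val on A. -/
theorem stmt9 {ι : Type*} [DecidableEq ι] (F : Finset ι)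
    (ℱ : Set (Finset ι)) (hdown : ∀ A ∈ ℱ, ∀ B ⊆ A, B ∈ ℱ)
    (P : Finset (Finset ι)) (hP : ∀ A ∈ P, A ⊆ F)
    (hPne : ∀ A ∈ P, A.Nonempty)
    (hPdisj : ∀ A ∈ P, ∀ B ∈ P, A ≠ B → Disjoint A B)
    (val : ι → ℕ) (n : Finset ι → ℕ)
    (hval : ∀ A ∈ P, ∀ f ∈ A, val f = n A)
    (hval0 : ∀ f ∈ F, (∀ A ∈ P, f ∉ A) → val f = 0)
    (m : ℕ)
    (hT : ∀ T ∈ ℱ, T ⊆ F → (∀ A ∈ P, (T ∩ A).card ≤ 1) → ∑ f ∈ T, val f ≤ m - 1) :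
    ∀ S ∈ ℱ, S ⊆ F → ∑ A ∈ P.filter (fun A => (S ∩ A).Nonempty), n A ≤ m - 1 := by
  classical
  intro S hS hSF
  set Q := P.filter (fun A => (S ∩ A).Nonempty) with hQdef
  have hQP : ∀ A ∈ Q, A ∈ P := fun A hA => (Finset.mem_filter.mp hA).1
  have hex : ∀ A : Q, ∃ x, x ∈ S ∩ (A : Finset ι) :=
    fun A => (Finset.mem_filter.mp A.2).2
  choose r hr using hex
  have hrS : ∀ A : Q, r A ∈ S := fun A => (Finset.mem_inter.mp (hr A)).1
  have hrA : ∀ A : Q, r A ∈ (A : Finset ι) := fun A => (Finset.mem_inter.mp (hr A)).2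
  set T := Q.attach.image r with hTdef
  have hTsub : T ⊆ S := by
    intro x hx
    obtain ⟨A, _, rfl⟩ := Finset.mem_image.mp hx
    exact hrS A
  have hTmem : T ∈ ℱ := hdown S hS T hTsub
  have hinj : ∀ A ∈ Q.attach, ∀ B ∈ Q.attach, r A = r B → A = B := by
    intro A _ B _ hab
    by_contra hne
    have hne' : (A : Finset ι) ≠ (B : Finset ι) := fun h => hne (Subtype.ext h)
    have hd := hPdisj _ (hQP _ A.2) _ (hQP _ B.2) hne'
    exact (Finset.disjoint_left.mp hd (hrA A)) (hab ▸ hrA B)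
  have hcard : ∀ A ∈ P, (T ∩ A).card ≤ 1 := by
    intro A hA
    rw [Finset.card_le_one]
    intro x hx y hy
    obtain ⟨hxT, hxA⟩ := Finset.mem_inter.mp hx
    obtain ⟨hyT, hyA⟩ := Finset.mem_inter.mp hy
    obtain ⟨B, _, rfl⟩ := Finset.mem_image.mp hxT
    obtain ⟨C, _, rfl⟩ := Finset.mem_image.mp hyT
    have hAB : A = (B : Finset ι) := by
      by_contra hne
      exact (Finset.disjoint_left.mp (hPdisj _ hA _ (hQP _ B.2) hne) hxA) (hrA B)
    have hAC : A = (C : Finset ι) := by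
      by_contra hne
      exact (Finset.disjoint_left.mp (hPdisj _ hA _ (hQP _ C.2) hne) hyA) (hrA C)
    have : B = C := Subtype.ext (hAB ▸ hAC)
    rw [this]
  have hsum : ∑ f ∈ T, val f = ∑ A ∈ Q, n A := by
    rw [hTdef, Finset.sum_image hinj]
    rw [← Finset.sum_attach Q n]
    exact Finset.sum_congr rfl fun A _ => hval _ (hQP _ A.2) _ (hrA A)
  calc ∑ A ∈ Q, n A = ∑ f ∈ T, val f := hsum.symm
    _ ≤ m - 1 := hT T hTmem (hTsub.trans hSF) hcard
end

section
/- Let C, F be finite sets with metric d on C ∪ F, R ⊆ C with pairwise distances > 2, Chld : R → 2^C a partition of C with Chld(v) ⊆ B_C(v,2), and S ⊆ F intersecting each B_F(v,1) (v ∈ R) in at most one point. Then the number of points of C within distance 3 of S is at least Σ_{v ∈ R : B_F(v,1) ∩ S ≠ ∅} |Chld(v)|. -/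
theorem stmt13 {X : Type*} [MetricSpace X] [DecidableEq X]
    (F C : Finset X) (R : Finset X) (hRC : R ⊆ C)
    (hfar : ∀ u ∈ R, ∀ v ∈ R, u ≠ v → dist u v > 2)
    (Chld : X → Finset X)
    (hdisj : ∀ u ∈ R, ∀ v ∈ R, u ≠ v → Disjoint (Chld u) (Chld v))
    (hunion : R.biUnion Chld = C)
    (hball : ∀ v ∈ R, Chld v ⊆ C.filter (fun u => dist u v ≤ 2))
    (S : Finset X) (hSF : S ⊆ F)
    (hone : ∀ v ∈ R, (S ∩ F.filter (fun f => dist v f ≤ 1)).card ≤ 1) :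
    (∑ v ∈ R.filter
        (fun v => (S ∩ F.filter (fun f => dist v f ≤ 1)).Nonempty),
        (Chld v).card)
      ≤ (C.filter (fun u => ∃ f ∈ S, dist u f ≤ 3)).card := by
  set T := R.filter (fun v => (S ∩ F.filter (fun f => dist v f ≤ 1)).Nonempty) with hT
  have hdisj' : ∀ u ∈ T, ∀ v ∈ T, u ≠ v → Disjoint (Chld u) (Chld v) := by
    intro u hu v hv huv
    exact hdisj u (Finset.mem_filter.mp hu).1 v (Finset.mem_filter.mp hv).1 huv
  rw [← Finset.card_biUnion hdisj']
  apply Finset.card_le_card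
  intro u hu
  obtain ⟨v, hv, huC⟩ := Finset.mem_biUnion.mp hu
  obtain ⟨hvR, ⟨f, hf⟩⟩ := Finset.mem_filter.mp hv
  rw [Finset.mem_inter, Finset.mem_filter] at hf
  have h2 := Finset.mem_filter.mp (hball v hvR huC)
  refine Finset.mem_filter.mpr ⟨h2.1, f, hf.1, ?_⟩
  calc dist u f ≤ dist u v + dist v f := dist_triangle u v f
    _ ≤ 2 + 1 := add_le_add h2.2 hf.2.2
    _ = 3 := by norm_num
end

section
/- Let 𝒫 be a sub-partition of a finite set F, w : F → ℕ, val : F → ℕ constant on each part of 𝒫. Then max{val(S) : S ⊆ F, w(S) ≤ k, |S ∩ A| ≤ 1 ∀A ∈ 𝒫, S ⊆ ⋃𝒫} equals the optimum of the knapsack instance with one item per part A ∈ 𝒫 of weight min_{f∈A} w(f) and value n_A (the common value of val on A), i.e., max over R ⊆ 𝒫 with Σ_{A∈R} min_{f∈A} w(f) ≤ k of Σ_{A∈R} n_A. -/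
theorem stmt15 {ι : Type*} [DecidableEq ι] (F : Finset ι)
    (P : Finset (Finset ι)) (hP : ∀ A ∈ P, A ⊆ F)
    (hPne : ∀ A ∈ P, A.Nonempty)
    (hPdisj : ∀ A ∈ P, ∀ B ∈ P, A ≠ B → Disjoint A B)
    (w val : ι → ℕ) (n : Finset ι → ℕ)
    (hval : ∀ A ∈ P, ∀ f ∈ A, val f = n A)
    (k : ℕ) :
    ((F.powerset.filter (fun S =>
        ∑ f ∈ S, w f ≤ k ∧ (∀ A ∈ P, (S ∩ A).card ≤ 1) ∧ S ⊆ P.biUnion id)).sup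
      (fun S => ∑ f ∈ S, val f))
    = ((P.powerset.filter (fun R : Finset (Finset ι) =>
          ∑ A ∈ R, sInf (w '' ((A : Finset ι) : Set ι)) ≤ k)).sup
        (fun R : Finset (Finset ι) => ∑ A ∈ R, n A)) := by
  classical
  have hinf : ∀ A ∈ P, ∃ f, f ∈ A ∧ w f = sInf (w '' ((A : Finset ι) : Set ι)) := by
    intro A hA
    have hne : (w '' ((A : Finset ι) : Set ι)).Nonempty :=
      (Set.Nonempty.image w (by exact_mod_cast (hPne A hA)))
    obtain ⟨f, hf, hwf⟩ := Nat.sInf_mem hne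
    exact ⟨f, by exact_mod_cast hf, hwf⟩
  rcases isEmpty_or_nonempty ι with hι | hι
  · have hP0 : P = ∅ := by
      rw [Finset.eq_empty_iff_forall_notMem]
      intro A hA
      obtain ⟨f, _⟩ := hPne A hA
      exact IsEmpty.false f
    have hF0 : F = ∅ := Finset.eq_empty_of_isEmpty F
    subst hP0 hF0
    simp [Finset.filter_singleton]
  apply le_antisymm
  · apply Finset.sup_le
    intro S hS
    simp only [Finset.mem_filter, Finset.mem_powerset] at hS
    obtain ⟨hSF, hwk, hcard, hSsub⟩ := hS
    set R := P.filter (fun A => (S ∩ A).Nonempty) with hR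
    have hRP : R ⊆ P := Finset.filter_subset _ _
    have hsing : ∀ A ∈ R, ∃ f, S ∩ A = {f} := by
      intro A hA
      rw [hR, Finset.mem_filter] at hA
      exact Finset.card_eq_one.mp
        (le_antisymm (hcard A hA.1) (Finset.card_pos.mpr hA.2))
    have hSeq : S = R.biUnion (fun A => S ∩ A) := by
      ext f
      simp only [Finset.mem_biUnion, hR, Finset.mem_filter]
      constructor
      · intro hf
        have h := hSsub hf
        simp only [Finset.mem_biUnion, id] at h
        obtain ⟨A, hAP, hfA⟩ := h
        exact ⟨A, ⟨hAP, ⟨f, Finset.mem_inter.mpr ⟨hf, hfA⟩⟩⟩,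
          Finset.mem_inter.mpr ⟨hf, hfA⟩⟩
      · rintro ⟨A, _, hf⟩
        exact (Finset.mem_inter.mp hf).1
    have hdisj : (R : Set (Finset ι)).PairwiseDisjoint (fun A => S ∩ A) := by
      intro A hA B hB hne
      simp only [Function.onFun]
      exact Finset.disjoint_left.mpr (fun x hx hx' =>
        Finset.disjoint_left.mp (hPdisj A (hRP hA) B (hRP hB) hne)
          (Finset.mem_inter.mp hx).2 (Finset.mem_inter.mp hx').2)
    have hsum : ∀ (u : ι → ℕ), ∑ f ∈ S, u f = ∑ A ∈ R, ∑ f ∈ S ∩ A, u f := by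
      intro u
      conv_lhs => rw [hSeq]
      exact Finset.sum_biUnion hdisj
    have hRmem : R ∈ P.powerset.filter (fun R : Finset (Finset ι) =>
        ∑ A ∈ R, sInf (w '' ((A : Finset ι) : Set ι)) ≤ k) := by
      simp only [Finset.mem_filter, Finset.mem_powerset]
      refine ⟨hRP, le_trans ?_ (le_trans (le_of_eq (hsum w).symm) hwk)⟩
      apply Finset.sum_le_sum
      intro A hA
      obtain ⟨f, hf⟩ := hsing A hA
      rw [hf, Finset.sum_singleton]
      have hfA : f ∈ A := (Finset.mem_inter.mp (hf ▸ Finset.mem_singleton_self f)).2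
      exact Nat.sInf_le ⟨f, by exact_mod_cast hfA, rfl⟩
    have hvalS : ∑ f ∈ S, val f = ∑ A ∈ R, n A := by
      rw [hsum val]
      apply Finset.sum_congr rfl
      intro A hA
      obtain ⟨f, hf⟩ := hsing A hA
      rw [hf, Finset.sum_singleton]
      have hfA : f ∈ A := (Finset.mem_inter.mp (hf ▸ Finset.mem_singleton_self f)).2
      exact hval A (hRP hA) f hfA
    rw [hvalS]
    exact Finset.le_sup (f := fun R : Finset (Finset ι) => ∑ A ∈ R, n A) hRmem
  · apply Finset.sup_le
    intro R hR
    simp only [Finset.mem_filter, Finset.mem_powerset] at hR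
    obtain ⟨hRP, hwk⟩ := hR
    choose! g hg1 hg2 using hinf
    set S := R.image g with hS
    have hginj : ∀ A ∈ R, ∀ B ∈ R, g A = g B → A = B := by
      intro A hA B hB hgab
      by_contra hne
      exact Finset.disjoint_left.mp (hPdisj A (hRP hA) B (hRP hB) hne)
        (hg1 A (hRP hA)) (hgab ▸ hg1 B (hRP hB))
    have hsumS : ∀ (u : ι → ℕ), ∑ f ∈ S, u f = ∑ A ∈ R, u (g A) :=
      fun u => Finset.sum_image hginj
    have hSmem : S ∈ F.powerset.filter (fun S =>
        ∑ f ∈ S, w f ≤ k ∧ (∀ A ∈ P, (S ∩ A).card ≤ 1) ∧ S ⊆ P.biUnion id) := by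
      simp only [Finset.mem_filter, Finset.mem_powerset]
      refine ⟨?_, ?_, ?_, ?_⟩
      · intro f hf
        obtain ⟨A, hA, rfl⟩ := Finset.mem_image.mp hf
        exact hP A (hRP hA) (hg1 A (hRP hA))
      · rw [hsumS w]
        calc ∑ A ∈ R, w (g A) = ∑ A ∈ R, sInf (w '' ((A : Finset ι) : Set ι)) :=
              Finset.sum_congr rfl (fun A hA => hg2 A (hRP hA))
          _ ≤ k := hwk
      · intro A hA
        have : S ∩ A ⊆ {g A} := by
          intro x hx
          obtain ⟨hxS, hxA⟩ := Finset.mem_inter.mp hx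
          obtain ⟨B, hB, rfl⟩ := Finset.mem_image.mp hxS
          have : B = A := by
            by_contra hne
            exact Finset.disjoint_left.mp (hPdisj B (hRP hB) A hA hne)
              (hg1 B (hRP hB)) hxA
          rw [this]
          exact Finset.mem_singleton_self _
        exact le_trans (Finset.card_le_card this) (by simp)
      · intro f hf
        obtain ⟨A, hA, rfl⟩ := Finset.mem_image.mp hf
        simp only [Finset.mem_biUnion, id]
        exact ⟨A, hRP hA, hg1 A (hRP hA)⟩
    have hvalS : ∑ A ∈ R, n A = ∑ f ∈ S, val f := by
      rw [hsumS val]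
      exact Finset.sum_congr rfl (fun A hA =>
        (hval A (hRP hA) (g A) (hg1 A (hRP hA))).symm)
    rw [hvalS]
    exact Finset.le_sup (f := fun S => ∑ f ∈ S, val f) hSmem
end

section
/- Suppose cov : C → ℝ≥0 on a finite set C, m ∈ ℝ, and suppose {Chld(v)}_{v∈R} partitions C with cov(v) ≥ cov(u) for all u ∈ Chld(v), and Σ_{v∈C} cov(v) ≥ m ≥ 1. If Σ_{v∈R'} |Chld(v)| ≤ m − 1 for a subset R' ⊆ R, then with λ(v) = α|Chld(v)| for v ∈ R (α = m/(m−1/2)) and λ = 0 elsewhere: Σ_{v ∈ R'} λ(v) < m while Σ_{v∈C} λ(v)·cov(v) > m. -/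
theorem stmt18 {α : Type*} [DecidableEq α]
    (C R : Finset α) (hRC : R ⊆ C)
    (Chld : α → Finset α)
    (hdisj : ∀ u ∈ R, ∀ v ∈ R, u ≠ v → Disjoint (Chld u) (Chld v))
    (hunion : R.biUnion Chld = C)
    (cov : α → ℝ) (hcov : ∀ u, 0 ≤ cov u)
    (hmax : ∀ v ∈ R, ∀ u ∈ Chld v, cov u ≤ cov v)
    (m : ℕ) (hm : 1 ≤ m)
    (hcovsum : (m : ℝ) ≤ ∑ u ∈ C, cov u)
    (R' : Finset α) (hR' : R' ⊆ R)
    (hsmall : (∑ v ∈ R', ((Chld v).card : ℕ) : ℝ) ≤ (m : ℝ) - 1)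
    (al : ℝ) (hal : al = (m : ℝ) / ((m : ℝ) - 1/2))
    (lam : α → ℝ)
    (hlam : ∀ v ∈ R, lam v = al * ((Chld v).card : ℝ))
    (hlam0 : ∀ v, v ∉ R → lam v = 0) :
    (∑ v ∈ R', lam v < m) ∧ ((m : ℝ) < ∑ v ∈ C, lam v * cov v) := by
  have hm1 : (1 : ℝ) ≤ (m : ℝ) := by exact_mod_cast hm
  have hpos : (0 : ℝ) < (m : ℝ) - 1/2 := by linarith
  have hal1 : 1 < al := by
    rw [hal, lt_div_iff₀ hpos]; linarith
  have hal0 : 0 < al := by linarith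
  constructor
  · have h1 : ∑ v ∈ R', lam v = al * ∑ v ∈ R', ((Chld v).card : ℝ) := by
      rw [Finset.mul_sum]
      exact Finset.sum_congr rfl (fun v hv => hlam v (hR' hv))
    rw [h1]
    have hS : ∑ v ∈ R', ((Chld v).card : ℝ) ≤ (m : ℝ) - 1 := by
      rw [← Nat.cast_sum] at hsmall ⊢
      exact hsmall
    have : al * ∑ v ∈ R', ((Chld v).card : ℝ) ≤ al * ((m : ℝ) - 1) :=
      mul_le_mul_of_nonneg_left hS hal0.le
    have key : al * ((m : ℝ) - 1) < m := by
      rw [hal, div_mul_eq_mul_div, div_lt_iff₀ hpos]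
      nlinarith
    linarith
  · have h2 : ∑ v ∈ C, lam v * cov v = ∑ v ∈ R, lam v * cov v := by
      refine (Finset.sum_subset hRC (fun v _ hv => ?_)).symm
      rw [hlam0 v hv, zero_mul]
    have h3 : ∀ v ∈ R, al * ∑ u ∈ Chld v, cov u ≤ lam v * cov v := by
      intro v hv
      rw [hlam v hv, mul_assoc]
      refine mul_le_mul_of_nonneg_left ?_ hal0.le
      calc ∑ u ∈ Chld v, cov u ≤ ∑ u ∈ Chld v, cov v :=
            Finset.sum_le_sum (fun u hu => hmax v hv u hu)
        _ = ((Chld v).card : ℝ) * cov v := by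
            rw [Finset.sum_const, nsmul_eq_mul]
    have h4 : ∑ v ∈ R, ∑ u ∈ Chld v, cov u = ∑ u ∈ C, cov u := by
      rw [← hunion, Finset.sum_biUnion hdisj]
    have h5 : al * (m : ℝ) ≤ ∑ v ∈ R, lam v * cov v := by
      calc al * (m : ℝ) ≤ al * ∑ u ∈ C, cov u :=
            mul_le_mul_of_nonneg_left hcovsum hal0.le
        _ = ∑ v ∈ R, al * ∑ u ∈ Chld v, cov u := by
            rw [← Finset.mul_sum, h4]
        _ ≤ ∑ v ∈ R, lam v * cov v := Finset.sum_le_sum h3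
    rw [h2]
    nlinarith
end
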